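/- arXiv:1701.06112 — 2 statements merged into one kernel-verified Lean document; each statement's English description precedes it below -/
import Mathlib

section
/- Let (H^•, H_•, ∪, ι, [-,-], d, η) be a differential calculus with duality of dimension n, and define Δ : H^• → H^{•-1} by PD(Δ f) = d(PD f), where PD(f) = ι_f η. Then for all homogeneous f, g ∈ H^•, the Gerstenhaber bracket satisfies [f,g] = (-1)^{|f|+1}(Δ(f ∪ g) − Δ(f) ∪ g − (-1)^{|f|} f ∪ Δ(g)); that is, (H^•, ∪, Δ) is a Batalin–Vilkovisky algebra. -/
/-!
STATEMENT 0 (Lambre's theorem / Theorem 5.6 of the paper).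
Let `(H^•, H_•, ∪, ι, [-,-], d, η)` be a differential calculus with duality of
dimension `n`, and define `Δ : H^• → H^{•-1}` by `PD (Δ f) = d (PD f)`, where
`PD f = ι_f η`.  Then for all homogeneous `f, g ∈ H^•` the Gerstenhaber bracket
satisfies
`[f,g] = (-1)^{|f|+1} (Δ(f ∪ g) − Δ(f) ∪ g − (-1)^{|f|} f ∪ Δ(g))`;
that is, `(H^•, ∪, Δ)` is a Batalin–Vilkovisky algebra.

`V` models `H^•` (a graded commutative algebra, with graded pieces `gradingV`),
`M` models `H_•` (a graded module over it via the contraction `ι`), `d` is the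
square-zero degree `+1` operator, and `η ∈ H_n` is the volume form.
-/

/-- A differential calculus with duality (Tamarkin–Tsygan, Lambre). -/
structure DiffCalculusWithDuality (k V M : Type*) [Field k] [Ring V] [Algebra k V]
    [AddCommGroup M] [Module k M] where
  gradingV : ℤ → Submodule k V
  gradingM : ℤ → Submodule k M
  mul_mem : ∀ {i j : ℤ} {a b : V}, a ∈ gradingV i → b ∈ gradingV j →
    a * b ∈ gradingV (i + j)
  /-- graded commutativity of the cup product -/
  gcomm : ∀ {i j : ℤ} {a b : V}, a ∈ gradingV i → b ∈ gradingV j →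
    a * b = ((-1 : k) ^ (i * j)) • (b * a)
  /-- the Gerstenhaber bracket (of degree `-1`) -/
  bracket : V →ₗ[k] V →ₗ[k] V
  bracket_mem : ∀ {i j : ℤ} {a b : V}, a ∈ gradingV i → b ∈ gradingV j →
    bracket a b ∈ gradingV (i + j - 1)
  /-- graded antisymmetry of the shifted Lie bracket -/
  antisymm : ∀ {i j : ℤ} {a b : V}, a ∈ gradingV i → b ∈ gradingV j →
    bracket a b = -(((-1 : k) ^ ((i + 1) * (j + 1))) • bracket b a)
  /-- graded Jacobi identity -/
  jacobi : ∀ {i j : ℤ} {a b c : V}, a ∈ gradingV i → b ∈ gradingV j →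
    bracket a (bracket b c) =
      bracket (bracket a b) c + ((-1 : k) ^ ((i + 1) * (j + 1))) • bracket b (bracket a c)
  /-- the Leibniz (Poisson) compatibility of bracket and product -/
  leibniz : ∀ {i j : ℤ} {a b : V} (c : V), a ∈ gradingV i → b ∈ gradingV j →
    bracket (a * b) c = a * bracket b c + ((-1 : k) ^ (i * j)) • (b * bracket a c)
  /-- the contraction (cap product) `ι` making `H_•` a module over `(H^•, ∪)` -/
  ι : V →ₗ[k] M →ₗ[k] M
  ι_mem : ∀ {i m : ℤ} {a : V} {x : M}, a ∈ gradingV i → x ∈ gradingM m →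
    ι a x ∈ gradingM (m - i)
  ι_one : ∀ x : M, ι 1 x = x
  ι_mul : ∀ (a b : V) (x : M), ι (a * b) x = ι a (ι b x)
  /-- the square-zero degree `+1` operator on `H_•` -/
  d : M →ₗ[k] M
  d_mem : ∀ {m : ℤ} {x : M}, x ∈ gradingM m → d x ∈ gradingM (m + 1)
  d_sq : ∀ x : M, d (d x) = 0
  /-- the Cartan relation
  `(-1)^{|f|+1} ι_{[f,g]} = L_f ι_g − (-1)^{|g|(|f|+1)} ι_g L_f`
  with `L_f := d ι_f − (-1)^{|f|} ι_f d`. -/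
  cartan : ∀ {i j : ℤ} {a b : V}, a ∈ gradingV i → b ∈ gradingV j → ∀ x : M,
    ((-1 : k) ^ (i + 1)) • ι (bracket a b) x =
      (d (ι a (ι b x)) - ((-1 : k) ^ i) • ι a (d (ι b x)))
        - ((-1 : k) ^ (j * (i + 1))) •
            (ι b (d (ι a x)) - ((-1 : k) ^ i) • ι b (ι a (d x)))
  /-- the dimension -/
  n : ℤ
  /-- the volume form -/
  η : M
  η_mem : η ∈ gradingM n
  ι_one_η : ι 1 η = η
  d_η : d η = 0
  /-- the Van den Bergh / noncommutative Poincaré duality: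
  `ι_{(-)} η : H^i → H_{n-i}` is an isomorphism for every `i`. -/
  PD_bijOn : ∀ i : ℤ, Set.BijOn (fun a => ι a η) (gradingV i : Set V) (gradingM (n - i) : Set M)

/-- Lambre's theorem: the operator `Δ` defined by `PD (Δ f) = d (PD f)` generates
the Gerstenhaber bracket, i.e. `(H^•, ∪, Δ)` is a Batalin–Vilkovisky algebra. -/
theorem diffCalculusWithDuality_BV
    (k V M : Type*) [Field k] [Ring V] [Algebra k V] [AddCommGroup M] [Module k M]
    (D : DiffCalculusWithDuality k V M)
    (Δ : V →ₗ[k] V)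
    (hΔ_mem : ∀ {i : ℤ} {a : V}, a ∈ D.gradingV i → Δ a ∈ D.gradingV (i - 1))
    (hΔ : ∀ a : V, D.ι (Δ a) D.η = D.d (D.ι a D.η))
    {i j : ℤ} {a b : V} (ha : a ∈ D.gradingV i) (hb : b ∈ D.gradingV j) :
    D.bracket a b =
      ((-1 : k) ^ (i + 1)) •
        (Δ (a * b) - Δ a * b - ((-1 : k) ^ i) • (a * Δ b)) := by
  have hne : (-1 : k) ≠ 0 := by norm_num
  have hΔa := hΔ_mem ha
  have hΔb := hΔ_mem hb
  have hab : a * b ∈ D.gradingV (i + j) := D.mul_mem ha hb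
  have hΔab := hΔ_mem hab
  -- the Cartan relation at η
  have hc := D.cartan ha hb D.η
  rw [D.d_η, map_zero, map_zero, smul_zero, sub_zero] at hc
  -- rewrite everything in terms of contractions against η
  have e1 : D.d (D.ι a (D.ι b D.η)) = D.ι (Δ (a * b)) D.η := by
    rw [hΔ, D.ι_mul]
  have e2 : D.ι a (D.d (D.ι b D.η)) = D.ι (a * Δ b) D.η := by
    rw [← hΔ, D.ι_mul]
  have e3 : D.ι b (D.d (D.ι a D.η)) = D.ι (b * Δ a) D.η := by
    rw [← hΔ, D.ι_mul]
  rw [e1, e2, e3] at hc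
  -- commute b past Δ a
  have hcomm : b * Δ a = ((-1 : k) ^ (j * (i - 1))) • (Δ a * b) := D.gcomm hb hΔa
  rw [hcomm] at hc
  have hsign : ((-1 : k) ^ (j * (i + 1))) * ((-1 : k) ^ (j * (i - 1))) = 1 := by
    rw [← zpow_add₀ hne]
    have : j * (i + 1) + j * (i - 1) = 2 * (j * i) := by ring
    rw [this, zpow_mul]
    norm_num
  have hsq : ((-1 : k) ^ (i + 1)) * ((-1 : k) ^ (i + 1)) = 1 := by
    rw [← zpow_add₀ hne]
    have : (i + 1) + (i + 1) = 2 * (i + 1) := by ring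
    rw [this, zpow_mul]
    norm_num
  -- clean up the scalar on the last term
  have hc2 : ((-1 : k) ^ (i + 1)) • D.ι (D.bracket a b) D.η =
      D.ι (Δ (a * b)) D.η - ((-1 : k) ^ i) • D.ι (a * Δ b) D.η
        - D.ι (Δ a * b) D.η := by
    rw [hc, map_smul, LinearMap.smul_apply, smul_smul, hsign, one_smul]
  -- express the RHS as a single contraction
  have hc3 : D.ι (D.bracket a b) D.η =
      D.ι (((-1 : k) ^ (i + 1)) •
        (Δ (a * b) - Δ a * b - ((-1 : k) ^ i) • (a * Δ b))) D.η := by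
    have := congrArg (fun x => ((-1 : k) ^ (i + 1)) • x) hc2
    simp only [smul_smul, hsq, one_smul] at this
    rw [this, map_smul, map_sub, map_sub, map_smul, LinearMap.smul_apply,
        LinearMap.sub_apply, LinearMap.sub_apply, LinearMap.smul_apply]
    module
  -- membership of both sides in the same graded piece
  have hmem1 : D.bracket a b ∈ D.gradingV (i + j - 1) := D.bracket_mem ha hb
  have hmem2 : ((-1 : k) ^ (i + 1)) •
      (Δ (a * b) - Δ a * b - ((-1 : k) ^ i) • (a * Δ b)) ∈ D.gradingV (i + j - 1) := by
    apply Submodule.smul_mem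
    apply Submodule.sub_mem
    apply Submodule.sub_mem
    · exact hΔab
    · have := D.mul_mem hΔa hb
      have h' : i - 1 + j = i + j - 1 := by ring
      rwa [h'] at this
    · apply Submodule.smul_mem
      have := D.mul_mem ha hΔb
      have h' : i + (j - 1) = i + j - 1 := by ring
      rwa [h'] at this
  exact (D.PD_bijOn (i + j - 1)).injOn hmem1 hmem2 hc3
end

section
/- Let A be a Poisson algebra. The de Rham differential d on Ω^•(A) satisfies [d, ∂] = d∂ + ∂d = 0, where ∂ is the Koszul–Brylinski boundary; hence d descends to a square-zero operator on Poisson homology HP_•(A). -/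
/-!
STATEMENT 11.  Let `A` be a Poisson algebra.  The de Rham differential `d` on
`Ω^•(A)` satisfies `[d, ∂] = d∂ + ∂d = 0`, where `∂` is the Koszul–Brylinski
boundary; hence `d` descends to a square-zero operator on Poisson homology
`HP_•(A)`.

We realise this for the Poisson algebra `A = k[x_1,…,x_n]` with an arbitrary
Poisson bivector, where `Ω^•(A)` has the explicit model
`W := Finset (Fin n) → MvPolynomial (Fin n) k` (coefficient of `dx_S`).  The
Poisson structure is given by its components `π_{ab} = {x_a, x_b}`
(antisymmetric, satisfying the Jacobi identity), the bracket being
`{f,g} = Σ_{a,b} π_{ab} ∂_a f ∂_b g`; `∂` is given by the Koszul formula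
`∂(f₀ df₁∧⋯∧df_p) = Σ_i (-1)^{i-1}{f₀,f_i} df₁∧⋯d̂f_i⋯∧df_p
 + Σ_{i<j} (-1)^{j-i} f₀ d{f_i,f_j}∧df₁∧⋯d̂f_i⋯d̂f_j⋯∧df_p`.
-/

open MvPolynomial

variable (k : Type*) [Field k] [CharZero k] (n : ℕ)

/-- `(S.filter (· < a)).card`: the (0-based) position of `a` in `insert a S`. -/
def pos0 (a : Fin n) (S : Finset (Fin n)) : ℕ := (S.filter (· < a)).card

/-- The Poisson bracket determined by the components `π_{ab}`. -/
noncomputable def pb (π : Fin n → Fin n → MvPolynomial (Fin n) k)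
    (f g : MvPolynomial (Fin n) k) : MvPolynomial (Fin n) k :=
  ∑ a : Fin n, ∑ b : Fin n, π a b * pderiv a f * pderiv b g

/-- `{g, x_a}`. -/
noncomputable def brX (π : Fin n → Fin n → MvPolynomial (Fin n) k)
    (g : MvPolynomial (Fin n) k) (a : Fin n) : MvPolynomial (Fin n) k :=
  ∑ u : Fin n, π u a * pderiv u g

/-- The de Rham differential on `Ω^•(A)`. -/
noncomputable def dRham (ω : Finset (Fin n) → MvPolynomial (Fin n) k) :
    Finset (Fin n) → MvPolynomial (Fin n) k :=
  fun S => ∑ a ∈ S, ((-1 : k) ^ (pos0 n a S)) • pderiv a (ω (S.erase a))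

/-- The Koszul–Brylinski boundary, defined on the model by the Koszul formula
applied to coordinate forms `g · dx_T`. -/
noncomputable def KBd (π : Fin n → Fin n → MvPolynomial (Fin n) k)
    (ω : Finset (Fin n) → MvPolynomial (Fin n) k) :
    Finset (Fin n) → MvPolynomial (Fin n) k :=
  fun S =>
    (∑ a : Fin n, if a ∈ S then 0 else
      ((-1 : k) ^ (pos0 n a S)) • brX k n π (ω (insert a S)) a)
    + ∑ e ∈ S, ∑ a : Fin n, ∑ b : Fin n,
        if a ∈ S.erase e ∨ b ∈ S.erase e ∨ ¬ a < b then 0 else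
          (((-1 : k) ^ (pos0 n b (insert a (insert b (S.erase e)))
              - pos0 n a (insert a (insert b (S.erase e)))))
            * ((-1 : k) ^ (pos0 n e S))) •
            (pderiv e (π a b) * ω (insert a (insert b (S.erase e))))

set_option linter.unusedSectionVars false

section aux
variable {k n}

lemma eps_congr {x y : ℕ} (h : x % 2 = y % 2) : ((-1:k))^x = ((-1:k))^y := by
  rw [neg_one_pow_eq_pow_mod_two, h, ← neg_one_pow_eq_pow_mod_two]

lemma eps_neg {x y : ℕ} (h : (x + y) % 2 = 1) : ((-1:k))^x = -((-1:k))^y := by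
  have : ((-1:k))^x = ((-1:k))^(y+1) := eps_congr (by omega)
  rw [this, pow_succ, mul_neg_one]

lemma pos0_insert {a : Fin n} {S : Finset (Fin n)} (ha : a ∉ S) (b : Fin n) :
    pos0 n b (insert a S) = pos0 n b S + if a < b then 1 else 0 := by
  unfold pos0
  rw [Finset.filter_insert]
  split_ifs with h
  · rw [Finset.card_insert_of_notMem (fun hc => ha (Finset.mem_of_mem_filter a hc))]
  · simp

lemma pos0_erase {a : Fin n} {S : Finset (Fin n)} (ha : a ∈ S) (b : Fin n) :
    pos0 n b S = pos0 n b (S.erase a) + if a < b then 1 else 0 := by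
  conv_lhs => rw [← Finset.insert_erase ha]
  exact pos0_insert (Finset.notMem_erase a S) b

lemma pos0_le {a b : Fin n} (h : a ≤ b) (S : Finset (Fin n)) :
    pos0 n a S ≤ pos0 n b S := by
  apply Finset.card_le_card
  intro x hx
  simp only [Finset.mem_filter] at hx ⊢
  exact ⟨hx.1, lt_of_lt_of_le hx.2 h⟩

lemma pderiv_comm' (i j : Fin n) (p : MvPolynomial (Fin n) k) :
    pderiv i (pderiv j p) = pderiv j (pderiv i p) := by
  induction p using MvPolynomial.induction_on with
  | C a => simp
  | add p q hp hq => simp [hp, hq]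
  | mul_X p s hp =>
      by_cases his : s = i <;> by_cases hjs : s = j <;>
        simp [pderiv_mul, hp, his, hjs, Pi.single_apply] <;>
        split_ifs with h <;> simp [h, hp] <;> ring

lemma sum_univ_ite_mem {M : Type*} [AddCommMonoid M] (S : Finset (Fin n)) (g : Fin n → M) :
    ∑ c ∈ S, g c = ∑ c : Fin n, if c ∈ S then g c else 0 := by
  rw [Finset.sum_ite_mem, Finset.univ_inter]

lemma sum_erase_ite {M : Type*} [AddCommMonoid M] (S : Finset (Fin n)) (a : Fin n)
    (g : Fin n → M) :
    ∑ b ∈ S.erase a, g b = ∑ b ∈ S, if b = a then 0 else g b := by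
  rw [Finset.sum_ite, Finset.sum_const_zero, zero_add, Finset.filter_ne' S a]

lemma pi_diag {π : Fin n → Fin n → MvPolynomial (Fin n) k}
    (hskew : ∀ a b : Fin n, π a b = - π b a) (a : Fin n) : π a a = 0 := by
  have h : π a a + π a a = 0 := by linear_combination hskew a a
  have h2 : (2 : MvPolynomial (Fin n) k) * π a a = 0 := by ring_nf; linear_combination h
  rcases mul_eq_zero.mp h2 with h3 | h3
  · exact absurd h3 two_ne_zero
  · exact h3

lemma split3 {M : Type*} [AddCommMonoid M] (c : Fin n) (f : Fin n → Fin n → M)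
    (hcc : f c c = 0) :
    ∑ a : Fin n, ∑ b : Fin n, f a b
      = ((∑ b : Fin n, f c b) + (∑ a : Fin n, f a c))
        + ∑ a : Fin n, ∑ b : Fin n, if a = c ∨ b = c then 0 else f a b := by
  have key : ∀ a b : Fin n, f a b
      = (if a = c then f a b else 0)
        + ((if a = c then 0 else if b = c then f a b else 0)
        + (if a = c ∨ b = c then 0 else f a b)) := by
    intro a b
    by_cases h1 : a = c <;> by_cases h2 : b = c <;> simp [h1, h2]
  calc ∑ a : Fin n, ∑ b : Fin n, f a b
      = ∑ a : Fin n, ∑ b : Fin n, ((if a = c then f a b else 0)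
        + ((if a = c then 0 else if b = c then f a b else 0)
        + (if a = c ∨ b = c then 0 else f a b))) := by
        exact Finset.sum_congr rfl fun a _ => Finset.sum_congr rfl fun b _ => key a b
    _ = (∑ a : Fin n, ∑ b : Fin n, if a = c then f a b else 0)
        + ((∑ a : Fin n, ∑ b : Fin n, if a = c then 0 else if b = c then f a b else 0)
        + ∑ a : Fin n, ∑ b : Fin n, if a = c ∨ b = c then 0 else f a b) := by
        simp [Finset.sum_add_distrib]
    _ = ((∑ b : Fin n, f c b) + (∑ a : Fin n, f a c))
        + ∑ a : Fin n, ∑ b : Fin n, if a = c ∨ b = c then 0 else f a b := by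
        have e1 : (∑ a : Fin n, ∑ b : Fin n, if a = c then f a b else 0)
            = ∑ b : Fin n, f c b := by
          rw [Finset.sum_comm]
          refine Finset.sum_congr rfl fun b _ => ?_
          simp
        have e2 : (∑ a : Fin n, ∑ b : Fin n, (if a = c then 0 else if b = c then f a b else 0))
            = ∑ a : Fin n, f a c := by
          refine Finset.sum_congr rfl fun a _ => ?_
          by_cases h : a = c
          · simp [h, hcc]
          · simp [h]
        rw [e1, e2, add_assoc]

lemma dsq (ω : Finset (Fin n) → MvPolynomial (Fin n) k) (S : Finset (Fin n)) :
    dRham k n (dRham k n ω) S = 0 := by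
  unfold dRham
  calc ∑ a ∈ S, ((-1:k) ^ pos0 n a S) •
        pderiv a (∑ b ∈ S.erase a, ((-1:k) ^ pos0 n b (S.erase a)) •
          pderiv b (ω ((S.erase a).erase b)))
      = ∑ a ∈ S, ∑ b ∈ S, (if b = a then 0 else
          ((-1:k) ^ (pos0 n a S + pos0 n b (S.erase a))) •
            pderiv a (pderiv b (ω ((S.erase a).erase b)))) := by
        refine Finset.sum_congr rfl fun a _ => ?_
        rw [sum_erase_ite, map_sum, Finset.smul_sum]
        refine Finset.sum_congr rfl fun b _ => ?_
        split_ifs with h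
        · simp
        · rw [Derivation.map_smul, smul_smul, ← pow_add]
    _ = ∑ p : Fin n × Fin n, (if p.1 ∈ S ∧ p.2 ∈ S then
          (if p.2 = p.1 then 0 else
          ((-1:k) ^ (pos0 n p.1 S + pos0 n p.2 (S.erase p.1))) •
            pderiv p.1 (pderiv p.2 (ω ((S.erase p.1).erase p.2)))) else 0) := by
        rw [Fintype.sum_prod_type]
        dsimp only
        rw [sum_univ_ite_mem S _]
        refine Finset.sum_congr rfl fun a _ => ?_
        by_cases ha : a ∈ S
        · simp only [ha, true_and]
          rw [sum_univ_ite_mem S _]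
          simp
        · simp [ha]
    _ = 0 := by
        apply Finset.sum_ninvolution (fun p => (p.2, p.1))
        · intro ⟨a, b⟩
          by_cases hab : a ∈ S ∧ b ∈ S
          · obtain ⟨ha, hb⟩ := hab
            simp only [ha, hb, and_self, if_true]
            by_cases h : b = a
            · simp [h]
            · rw [if_neg h, if_neg (fun hh => h (hh.symm))]
              have hd : pderiv b (pderiv a (ω ((S.erase b).erase a)))
                  = pderiv a (pderiv b (ω ((S.erase a).erase b))) := by
                rw [Finset.erase_right_comm, pderiv_comm']
              rw [hd]
              have hs : ((-1:k) ^ (pos0 n b S + pos0 n a (S.erase b)))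
                  = -((-1:k) ^ (pos0 n a S + pos0 n b (S.erase a))) := by
                apply eps_neg
                have e1 := pos0_erase ha b
                have e2 := pos0_erase hb a
                split_ifs at e1 e2 <;> omega
              rw [hs, neg_smul, add_neg_cancel]
          · simp only [if_neg hab]
            rw [if_neg (fun hh => hab ⟨hh.2, hh.1⟩), add_zero]
        · intro ⟨a, b⟩ hne
          intro hh
          apply hne
          have : b = a := congrArg Prod.fst hh
          simp [this]
        · intro p; exact Finset.mem_univ _
        · intro p; rfl

end aux

/-- Contraction with the bivector `π` (interior product), on the model. -/
noncomputable def Jop (π : Fin n → Fin n → MvPolynomial (Fin n) k)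
    (ω : Finset (Fin n) → MvPolynomial (Fin n) k) :
    Finset (Fin n) → MvPolynomial (Fin n) k :=
  fun S => ∑ a : Fin n, ∑ b : Fin n,
    if a ∈ S ∨ b ∈ S ∨ ¬ a < b then 0 else
      ((-1:k) ^ (pos0 n a S + pos0 n b S + 1)) • (π a b * ω (insert a (insert b S)))

noncomputable def Npi (π : Fin n → Fin n → MvPolynomial (Fin n) k)
    (ω : Finset (Fin n) → MvPolynomial (Fin n) k) (S : Finset (Fin n)) :
    MvPolynomial (Fin n) k :=
  ∑ c : Fin n, ∑ a : Fin n, ∑ b : Fin n,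
    if c ∈ S ∧ a ∉ S.erase c ∧ b ∉ S.erase c ∧ a < b then
      ((-1:k) ^ (pos0 n c S + (pos0 n a (S.erase c) + pos0 n b (S.erase c) + 1))) •
        (pderiv c (π a b) * ω (insert a (insert b (S.erase c)))) else 0

noncomputable def NX1 (π : Fin n → Fin n → MvPolynomial (Fin n) k)
    (ω : Finset (Fin n) → MvPolynomial (Fin n) k) (S : Finset (Fin n)) :
    MvPolynomial (Fin n) k :=
  ∑ c : Fin n, ∑ b : Fin n,
    if c ∈ S ∧ b ∉ S ∧ c < b then
      ((-1:k) ^ (pos0 n b S)) • (π c b * pderiv c (ω (insert b S))) else 0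

noncomputable def NX2 (π : Fin n → Fin n → MvPolynomial (Fin n) k)
    (ω : Finset (Fin n) → MvPolynomial (Fin n) k) (S : Finset (Fin n)) :
    MvPolynomial (Fin n) k :=
  ∑ c : Fin n, ∑ a : Fin n,
    if c ∈ S ∧ a ∉ S ∧ a < c then
      ((-1:k) ^ (pos0 n a S + 1)) • (π a c * pderiv c (ω (insert a S))) else 0

noncomputable def NX3 (π : Fin n → Fin n → MvPolynomial (Fin n) k)
    (ω : Finset (Fin n) → MvPolynomial (Fin n) k) (S : Finset (Fin n)) :
    MvPolynomial (Fin n) k :=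
  ∑ c : Fin n, ∑ a : Fin n, ∑ b : Fin n,
    if c ∈ S ∧ a ∉ S ∧ b ∉ S ∧ a < b then
      ((-1:k) ^ (pos0 n c S + (pos0 n a (S.erase c) + pos0 n b (S.erase c) + 1))) •
        (π a b * pderiv c (ω (insert a (insert b (S.erase c))))) else 0

noncomputable def NY1 (π : Fin n → Fin n → MvPolynomial (Fin n) k)
    (ω : Finset (Fin n) → MvPolynomial (Fin n) k) (S : Finset (Fin n)) :
    MvPolynomial (Fin n) k :=
  ∑ a : Fin n, ∑ b : Fin n,
    if a ∉ S ∧ b ∉ S ∧ a < b then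
      ((-1:k) ^ (pos0 n b S + 1)) • (π a b * pderiv a (ω (insert b S))) else 0

noncomputable def NY2 (π : Fin n → Fin n → MvPolynomial (Fin n) k)
    (ω : Finset (Fin n) → MvPolynomial (Fin n) k) (S : Finset (Fin n)) :
    MvPolynomial (Fin n) k :=
  ∑ a : Fin n, ∑ b : Fin n,
    if a ∉ S ∧ b ∉ S ∧ a < b then
      ((-1:k) ^ (pos0 n a S)) • (π a b * pderiv b (ω (insert a S))) else 0

section aux2
variable {k n}

lemma C1 (π : Fin n → Fin n → MvPolynomial (Fin n) k)
    (ω : Finset (Fin n) → MvPolynomial (Fin n) k) (S : Finset (Fin n)) :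
    (∑ e ∈ S, ∑ a : Fin n, ∑ b : Fin n,
        if a ∈ S.erase e ∨ b ∈ S.erase e ∨ ¬ a < b then 0 else
          (((-1 : k) ^ (pos0 n b (insert a (insert b (S.erase e)))
              - pos0 n a (insert a (insert b (S.erase e)))))
            * ((-1 : k) ^ (pos0 n e S))) •
            (pderiv e (π a b) * ω (insert a (insert b (S.erase e)))))
      = Npi k n π ω S := by
  rw [sum_univ_ite_mem S _]
  unfold Npi
  refine Finset.sum_congr rfl fun e _ => ?_
  by_cases he : e ∈ S
  · rw [if_pos he]
    refine Finset.sum_congr rfl fun a _ => Finset.sum_congr rfl fun b _ => ?_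
    by_cases hc : a ∈ S.erase e ∨ b ∈ S.erase e ∨ ¬ a < b
    · rw [if_pos hc, if_neg (by tauto)]
    · push_neg at hc
      obtain ⟨ha, hb, hab⟩ := hc
      rw [if_neg (by tauto), if_pos ⟨he, ha, hb, hab⟩]
      congr 1
      rw [← pow_add]
      apply eps_congr
      have hab' : a ≠ b := ne_of_lt hab
      have haX : a ∉ insert b (S.erase e) := by simp [ha, hab']
      have h1 : pos0 n a (insert a (insert b (S.erase e))) = pos0 n a (S.erase e) := by
        rw [pos0_insert haX a, pos0_insert hb a, if_neg (lt_irrefl a),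
          if_neg (asymm hab), add_zero, add_zero]
      have h2 : pos0 n b (insert a (insert b (S.erase e))) = pos0 n b (S.erase e) + 1 := by
        rw [pos0_insert haX b, pos0_insert hb b, if_pos hab, if_neg (lt_irrefl b), add_zero]
      have h3 : pos0 n a (S.erase e) ≤ pos0 n b (S.erase e) := pos0_le (le_of_lt hab) _
      rw [h1, h2]
      omega
  · rw [if_neg he]
    symm
    apply Finset.sum_eq_zero; intro a _
    apply Finset.sum_eq_zero; intro b _
    rw [if_neg (by tauto)]

lemma notMem_erase_iff {b c : Fin n} {S : Finset (Fin n)} :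
    b ∉ S.erase c ↔ b = c ∨ b ∉ S := by
  simp only [Finset.mem_erase]; tauto

lemma C2 (π : Fin n → Fin n → MvPolynomial (Fin n) k)
    (ω : Finset (Fin n) → MvPolynomial (Fin n) k) (S : Finset (Fin n)) :
    dRham k n (Jop k n π ω) S
      = Npi k n π ω S + (NX1 k n π ω S + NX2 k n π ω S + NX3 k n π ω S) := by
  unfold dRham
  calc ∑ c ∈ S, ((-1:k) ^ pos0 n c S) • pderiv c (Jop k n π ω (S.erase c))
        = ∑ c ∈ S,
          ((∑ a : Fin n, ∑ b : Fin n, (if a ∈ S.erase c ∨ b ∈ S.erase c ∨ ¬ a < b then 0 else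
            ((-1:k) ^ (pos0 n c S + (pos0 n a (S.erase c) + pos0 n b (S.erase c) + 1))) •
              (pderiv c (π a b) * ω (insert a (insert b (S.erase c))))))
          + ∑ a : Fin n, ∑ b : Fin n, (if a ∈ S.erase c ∨ b ∈ S.erase c ∨ ¬ a < b then 0 else
            ((-1:k) ^ (pos0 n c S + (pos0 n a (S.erase c) + pos0 n b (S.erase c) + 1))) •
              (π a b * pderiv c (ω (insert a (insert b (S.erase c))))))) := by
        refine Finset.sum_congr rfl fun c _ => ?_
        unfold Jop
        rw [map_sum, Finset.smul_sum]
        simp only [← Finset.sum_add_distrib]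
        refine Finset.sum_congr rfl fun a _ => ?_
        rw [map_sum, Finset.smul_sum]
        refine Finset.sum_congr rfl fun b _ => ?_
        by_cases hcond : a ∈ S.erase c ∨ b ∈ S.erase c ∨ ¬ a < b
        · rw [if_pos hcond, if_pos hcond, if_pos hcond]; simp
        · rw [if_neg hcond, if_neg hcond, if_neg hcond, Derivation.map_smul, pderiv_mul,
            smul_smul, ← pow_add, smul_add]
    _ = Npi k n π ω S + ∑ c : Fin n, ∑ a : Fin n, ∑ b : Fin n,
          (if c ∈ S ∧ a ∉ S.erase c ∧ b ∉ S.erase c ∧ a < b then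
            ((-1:k) ^ (pos0 n c S + (pos0 n a (S.erase c) + pos0 n b (S.erase c) + 1))) •
              (π a b * pderiv c (ω (insert a (insert b (S.erase c))))) else 0) := by
        rw [sum_univ_ite_mem S _]
        have step : ∀ c : Fin n, (if c ∈ S then
            ((∑ a : Fin n, ∑ b : Fin n, (if a ∈ S.erase c ∨ b ∈ S.erase c ∨ ¬ a < b then 0 else
              ((-1:k) ^ (pos0 n c S + (pos0 n a (S.erase c) + pos0 n b (S.erase c) + 1))) •
                (pderiv c (π a b) * ω (insert a (insert b (S.erase c))))))
            + ∑ a : Fin n, ∑ b : Fin n, (if a ∈ S.erase c ∨ b ∈ S.erase c ∨ ¬ a < b then 0 else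
              ((-1:k) ^ (pos0 n c S + (pos0 n a (S.erase c) + pos0 n b (S.erase c) + 1))) •
                (π a b * pderiv c (ω (insert a (insert b (S.erase c))))))) else 0)
          = (∑ a : Fin n, ∑ b : Fin n,
              (if c ∈ S ∧ a ∉ S.erase c ∧ b ∉ S.erase c ∧ a < b then
              ((-1:k) ^ (pos0 n c S + (pos0 n a (S.erase c) + pos0 n b (S.erase c) + 1))) •
                (pderiv c (π a b) * ω (insert a (insert b (S.erase c)))) else 0))
            + ∑ a : Fin n, ∑ b : Fin n,
              (if c ∈ S ∧ a ∉ S.erase c ∧ b ∉ S.erase c ∧ a < b then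
              ((-1:k) ^ (pos0 n c S + (pos0 n a (S.erase c) + pos0 n b (S.erase c) + 1))) •
                (π a b * pderiv c (ω (insert a (insert b (S.erase c))))) else 0) := by
          intro c
          by_cases hc : c ∈ S
          · rw [if_pos hc]
            congr 1 <;>
            · refine Finset.sum_congr rfl fun a _ => Finset.sum_congr rfl fun b _ => ?_
              by_cases hcond : a ∈ S.erase c ∨ b ∈ S.erase c ∨ ¬ a < b
              · rw [if_pos hcond, if_neg (by tauto)]
              · push_neg at hcond
                rw [if_neg (by tauto), if_pos ⟨hc, hcond.1, hcond.2.1, hcond.2.2⟩]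
          · rw [if_neg hc]
            symm
            have z : ∀ (F : Fin n → Fin n → MvPolynomial (Fin n) k),
                (∑ a : Fin n, ∑ b : Fin n,
                  (if c ∈ S ∧ a ∉ S.erase c ∧ b ∉ S.erase c ∧ a < b then F a b else 0)) = 0 := by
              intro F
              apply Finset.sum_eq_zero; intro a _
              apply Finset.sum_eq_zero; intro b _
              rw [if_neg (by tauto)]
            rw [z, z, add_zero]
        simp only [step]
        rw [Finset.sum_add_distrib]
        rfl
    _ = Npi k n π ω S + (NX1 k n π ω S + NX2 k n π ω S + NX3 k n π ω S) := by
        congr 1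
        have hsplit : ∀ c : Fin n, (∑ a : Fin n, ∑ b : Fin n,
            (if c ∈ S ∧ a ∉ S.erase c ∧ b ∉ S.erase c ∧ a < b then
              ((-1:k) ^ (pos0 n c S + (pos0 n a (S.erase c) + pos0 n b (S.erase c) + 1))) •
                (π a b * pderiv c (ω (insert a (insert b (S.erase c))))) else 0))
          = ((∑ b : Fin n, if c ∈ S ∧ c ∉ S.erase c ∧ b ∉ S.erase c ∧ c < b then
              ((-1:k) ^ (pos0 n c S + (pos0 n c (S.erase c) + pos0 n b (S.erase c) + 1))) •
                (π c b * pderiv c (ω (insert c (insert b (S.erase c))))) else 0)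
            + (∑ a : Fin n, if c ∈ S ∧ a ∉ S.erase c ∧ c ∉ S.erase c ∧ a < c then
              ((-1:k) ^ (pos0 n c S + (pos0 n a (S.erase c) + pos0 n c (S.erase c) + 1))) •
                (π a c * pderiv c (ω (insert a (insert c (S.erase c))))) else 0))
            + ∑ a : Fin n, ∑ b : Fin n, (if a = c ∨ b = c then 0 else
              if c ∈ S ∧ a ∉ S.erase c ∧ b ∉ S.erase c ∧ a < b then
              ((-1:k) ^ (pos0 n c S + (pos0 n a (S.erase c) + pos0 n b (S.erase c) + 1))) •
                (π a b * pderiv c (ω (insert a (insert b (S.erase c))))) else 0) := by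
          intro c
          exact split3 c _ (by rw [if_neg (by simp)])
        simp only [hsplit]
        rw [Finset.sum_add_distrib, Finset.sum_add_distrib]
        congr 1
        · congr 1
          · -- = NX1
            unfold NX1
            refine Finset.sum_congr rfl fun c _ => Finset.sum_congr rfl fun b _ => ?_
            by_cases hgood : c ∈ S ∧ b ∉ S ∧ c < b
            · obtain ⟨hc, hb, hcb⟩ := hgood
              have harg : insert c (insert b (S.erase c)) = insert b S := by
                rw [Finset.insert_comm, Finset.insert_erase hc]
              rw [if_pos ⟨hc, Finset.notMem_erase c S,
                  fun h => hb (Finset.mem_of_mem_erase h), hcb⟩,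
                if_pos ⟨hc, hb, hcb⟩, harg]
              congr 1
              apply eps_congr
              have e1 := pos0_erase hc c
              have e2 := pos0_erase hc b
              rw [if_neg (lt_irrefl c), add_zero] at e1
              rw [if_pos hcb] at e2
              omega
            · rw [if_neg ?_, if_neg hgood]
              rintro ⟨h1, -, h3, h4⟩
              rcases notMem_erase_iff.mp h3 with rfl | h5
              · exact lt_irrefl _ h4
              · exact hgood ⟨h1, h5, h4⟩
          · -- = NX2
            unfold NX2
            refine Finset.sum_congr rfl fun c _ => Finset.sum_congr rfl fun a _ => ?_
            by_cases hgood : c ∈ S ∧ a ∉ S ∧ a < c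
            · obtain ⟨hc, ha, hac⟩ := hgood
              have harg : insert a (insert c (S.erase c)) = insert a S := by
                rw [Finset.insert_erase hc]
              rw [if_pos ⟨hc, fun h => ha (Finset.mem_of_mem_erase h),
                  Finset.notMem_erase c S, hac⟩,
                if_pos ⟨hc, ha, hac⟩, harg]
              congr 1
              apply eps_congr
              have e1 := pos0_erase hc c
              have e2 := pos0_erase hc a
              rw [if_neg (lt_irrefl c), add_zero] at e1
              rw [if_neg (asymm hac)] at e2
              omega
            · rw [if_neg ?_, if_neg hgood]
              rintro ⟨h1, h2, -, h4⟩
              rcases notMem_erase_iff.mp h2 with rfl | h5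
              · exact lt_irrefl _ h4
              · exact hgood ⟨h1, h5, h4⟩
        · -- = NX3
          unfold NX3
          refine Finset.sum_congr rfl fun c _ => Finset.sum_congr rfl fun a _ =>
            Finset.sum_congr rfl fun b _ => ?_
          by_cases hgood : c ∈ S ∧ a ∉ S ∧ b ∉ S ∧ a < b
          · obtain ⟨hc, ha, hb, hab⟩ := hgood
            have hac : ¬ (a = c ∨ b = c) := by
              rintro (rfl | rfl)
              · exact ha hc
              · exact hb hc
            rw [if_neg hac, if_pos ⟨hc, fun h => ha (Finset.mem_of_mem_erase h),
                fun h => hb (Finset.mem_of_mem_erase h), hab⟩, if_pos ⟨hc, ha, hb, hab⟩]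
          · rw [if_neg hgood]
            by_cases hac : a = c ∨ b = c
            · rw [if_pos hac]
            · rw [if_neg hac, if_neg (by simp only [notMem_erase_iff] at *; tauto)]

lemma C3 (π : Fin n → Fin n → MvPolynomial (Fin n) k)
    (ω : Finset (Fin n) → MvPolynomial (Fin n) k) (S : Finset (Fin n)) :
    Jop k n π (dRham k n ω) S
      = NY1 k n π ω S + (NY2 k n π ω S + NX3 k n π ω S) := by
  have step1 : Jop k n π (dRham k n ω) S
      = ∑ a : Fin n, ∑ b : Fin n,
        ((if a ∉ S ∧ b ∉ S ∧ a < b then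
          ((-1:k) ^ (pos0 n b S + 1)) • (π a b * pderiv a (ω (insert b S))) else 0)
        + ((if a ∉ S ∧ b ∉ S ∧ a < b then
          ((-1:k) ^ (pos0 n a S)) • (π a b * pderiv b (ω (insert a S))) else 0)
        + (if a ∉ S ∧ b ∉ S ∧ a < b then
          (∑ e ∈ S, ((-1:k) ^ (pos0 n a S + pos0 n b S + 1
              + pos0 n e (insert a (insert b S)))) •
            (π a b * pderiv e (ω ((insert a (insert b S)).erase e)))) else 0))) := by
    unfold Jop
    refine Finset.sum_congr rfl fun a _ => Finset.sum_congr rfl fun b _ => ?_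
    by_cases hcond : a ∈ S ∨ b ∈ S ∨ ¬ a < b
    · rw [if_pos hcond, if_neg (by tauto), if_neg (by tauto), if_neg (by tauto)]
      simp
    · push_neg at hcond
      obtain ⟨ha, hb, hab⟩ := hcond
      rw [if_neg (by tauto), if_pos ⟨ha, hb, hab⟩, if_pos ⟨ha, hb, hab⟩,
        if_pos ⟨ha, hb, hab⟩]
      unfold dRham
      have haT : a ∉ insert b S := by
        simp only [Finset.mem_insert]
        rintro (rfl | h)
        · exact lt_irrefl a hab
        · exact ha h
      rw [Finset.sum_insert haT, Finset.sum_insert hb, mul_add, mul_add,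
        smul_add, smul_add]
      congr 1
      · rw [Finset.erase_insert haT, mul_smul_comm, smul_smul, ← pow_add]
        congr 1
        apply eps_congr
        have e1 : pos0 n a (insert a (insert b S)) = pos0 n a S := by
          rw [pos0_insert haT a, pos0_insert hb a, if_neg (lt_irrefl a),
            if_neg (asymm hab), add_zero, add_zero]
        omega
      congr 1
      · have harg : (insert a (insert b S)).erase b = insert a S := by
          rw [Finset.erase_insert_of_ne (ne_of_lt hab), Finset.erase_insert hb]
        rw [harg, mul_smul_comm, smul_smul, ← pow_add]
        congr 1
        apply eps_congr
        have e1 : pos0 n b (insert a (insert b S)) = pos0 n b S + 1 := by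
          rw [pos0_insert haT b, pos0_insert hb b, if_pos hab, if_neg (lt_irrefl b), add_zero]
        omega
      · rw [Finset.mul_sum, Finset.smul_sum]
        refine Finset.sum_congr rfl fun e _ => ?_
        rw [mul_smul_comm, smul_smul, ← pow_add]
  rw [step1]
  simp only [Finset.sum_add_distrib]
  congr 1
  congr 1
  have h1 : (∑ a : Fin n, ∑ b : Fin n, (if a ∉ S ∧ b ∉ S ∧ a < b then
        (∑ e ∈ S, ((-1:k) ^ (pos0 n a S + pos0 n b S + 1
            + pos0 n e (insert a (insert b S)))) •
          (π a b * pderiv e (ω ((insert a (insert b S)).erase e)))) else 0))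
      = ∑ a : Fin n, ∑ b : Fin n, ∑ e : Fin n, (if e ∈ S ∧ a ∉ S ∧ b ∉ S ∧ a < b then
        ((-1:k) ^ (pos0 n a S + pos0 n b S + 1
            + pos0 n e (insert a (insert b S)))) •
          (π a b * pderiv e (ω ((insert a (insert b S)).erase e))) else 0) := by
    refine Finset.sum_congr rfl fun a _ => Finset.sum_congr rfl fun b _ => ?_
    by_cases hcond : a ∉ S ∧ b ∉ S ∧ a < b
    · rw [if_pos hcond, sum_univ_ite_mem S _]
      refine Finset.sum_congr rfl fun e _ => ?_
      by_cases he : e ∈ S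
      · rw [if_pos he, if_pos ⟨he, hcond⟩]
      · rw [if_neg he, if_neg (by tauto)]
    · rw [if_neg hcond]
      symm
      apply Finset.sum_eq_zero; intro e _
      rw [if_neg (by tauto)]
  rw [h1]
  refine ((Finset.sum_congr rfl fun a _ => Finset.sum_comm).trans Finset.sum_comm).trans ?_
  unfold NX3
  refine Finset.sum_congr rfl fun e _ => Finset.sum_congr rfl fun a _ =>
    Finset.sum_congr rfl fun b _ => ?_
  by_cases hcond : e ∈ S ∧ a ∉ S ∧ b ∉ S ∧ a < b
  · obtain ⟨he, ha, hb, hab⟩ := hcond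
    have hae : a ≠ e := fun h => ha (h ▸ he)
    have hbe : b ≠ e := fun h => hb (h ▸ he)
    have haT : a ∉ insert b S := by
      simp only [Finset.mem_insert]
      rintro (rfl | h)
      · exact lt_irrefl a hab
      · exact ha h
    have harg : (insert a (insert b S)).erase e = insert a (insert b (S.erase e)) := by
      rw [Finset.erase_insert_of_ne hae, Finset.erase_insert_of_ne hbe]
    rw [if_pos ⟨he, ha, hb, hab⟩, if_pos ⟨he, ha, hb, hab⟩, harg]
    congr 1
    apply eps_congr
    have e1 := pos0_insert haT e
    have e2 := pos0_insert hb e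
    have e3 := pos0_erase he a
    have e4 := pos0_erase he b
    rcases lt_or_gt_of_ne hae with h1 | h1 <;> rcases lt_or_gt_of_ne hbe with h2 | h2 <;>
      simp only [h1, h2, asymm h1, asymm h2, if_true, if_false] at e1 e2 e3 e4 <;> omega
  · rw [if_neg hcond, if_neg hcond]

lemma C4 (π : Fin n → Fin n → MvPolynomial (Fin n) k)
    (hskew : ∀ a b : Fin n, π a b = - π b a)
    (ω : Finset (Fin n) → MvPolynomial (Fin n) k) (S : Finset (Fin n)) :
    (∑ a : Fin n, if a ∈ S then 0 else
        ((-1 : k) ^ (pos0 n a S)) • brX k n π (ω (insert a S)) a)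
      = NX1 k n π ω S + (NX2 k n π ω S + (-NY1 k n π ω S + -NY2 k n π ω S)) := by
  have step1 : (∑ a : Fin n, if a ∈ S then 0 else
        ((-1 : k) ^ (pos0 n a S)) • brX k n π (ω (insert a S)) a)
      = ∑ β : Fin n, ∑ u : Fin n, (if β ∈ S then 0 else
        ((-1 : k) ^ (pos0 n β S)) • (π u β * pderiv u (ω (insert β S)))) := by
    refine Finset.sum_congr rfl fun β _ => ?_
    unfold brX
    by_cases hβ : β ∈ S
    · simp [hβ]
    · rw [if_neg hβ, Finset.smul_sum]
      exact Finset.sum_congr rfl fun u _ => (if_neg hβ).symm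
  rw [step1]
  have key : ∀ β u : Fin n, (if β ∈ S then 0 else
        ((-1 : k) ^ (pos0 n β S)) • (π u β * pderiv u (ω (insert β S))))
      = (if u ∈ S ∧ β ∉ S ∧ u < β then
          ((-1 : k) ^ (pos0 n β S)) • (π u β * pderiv u (ω (insert β S))) else 0)
      + ((if u ∈ S ∧ β ∉ S ∧ β < u then
          ((-1 : k) ^ (pos0 n β S)) • (π u β * pderiv u (ω (insert β S))) else 0)
      + ((if u ∉ S ∧ β ∉ S ∧ u < β then
          ((-1 : k) ^ (pos0 n β S)) • (π u β * pderiv u (ω (insert β S))) else 0)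
      + (if u ∉ S ∧ β ∉ S ∧ β < u then
          ((-1 : k) ^ (pos0 n β S)) • (π u β * pderiv u (ω (insert β S))) else 0))) := by
    intro β u
    by_cases hβ : β ∈ S
    · simp [hβ]
    · by_cases hu : u ∈ S
      · rcases lt_trichotomy u β with h | h | h
        · simp [hβ, hu, h, asymm h]
        · exact absurd (h ▸ hu) hβ
        · simp [hβ, hu, h, asymm h]
      · rcases lt_trichotomy u β with h | h | h
        · simp [hβ, hu, h, asymm h]
        · subst h
          simp [hβ, hu, pi_diag hskew]
        · simp [hβ, hu, h, asymm h]
  have step2 := Finset.sum_congr rfl fun β (_ : β ∈ Finset.univ) =>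
    Finset.sum_congr rfl fun u (_ : u ∈ Finset.univ) => key β u
  rw [step2]
  simp only [Finset.sum_add_distrib]
  congr 1
  · -- = NX1
    unfold NX1
    exact Finset.sum_comm
  congr 1
  · -- = NX2
    unfold NX2
    refine Eq.trans (Finset.sum_congr rfl fun β _ => Finset.sum_congr rfl fun u _ => ?_)
      Finset.sum_comm
    by_cases hcond : u ∈ S ∧ β ∉ S ∧ β < u
    · rw [if_pos hcond, if_pos hcond, hskew u β, neg_mul, smul_neg, pow_succ,
        mul_neg_one, neg_smul]
    · rw [if_neg hcond, if_neg hcond]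
  congr 1
  · -- = -NY1
    unfold NY1
    have h3 : ∀ β u : Fin n, (if u ∉ S ∧ β ∉ S ∧ u < β then
          ((-1 : k) ^ (pos0 n β S)) • (π u β * pderiv u (ω (insert β S))) else 0)
        = -(if u ∉ S ∧ β ∉ S ∧ u < β then
          ((-1 : k) ^ (pos0 n β S + 1)) • (π u β * pderiv u (ω (insert β S))) else 0) := by
      intro β u
      by_cases hcond : u ∉ S ∧ β ∉ S ∧ u < β
      · rw [if_pos hcond, if_pos hcond, pow_succ, mul_neg_one, neg_smul, neg_neg]
      · rw [if_neg hcond, if_neg hcond, neg_zero]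
    have step3 := Finset.sum_congr rfl fun β (_ : β ∈ Finset.univ) =>
      Finset.sum_congr rfl fun u (_ : u ∈ Finset.univ) => h3 β u
    rw [step3]
    simp only [Finset.sum_neg_distrib]
    rw [Finset.sum_comm]
  · -- = -NY2
    unfold NY2
    have h4 : ∀ β u : Fin n, (if u ∉ S ∧ β ∉ S ∧ β < u then
          ((-1 : k) ^ (pos0 n β S)) • (π u β * pderiv u (ω (insert β S))) else 0)
        = -(if β ∉ S ∧ u ∉ S ∧ β < u then
          ((-1 : k) ^ (pos0 n β S)) • (π β u * pderiv u (ω (insert β S))) else 0) := by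
      intro β u
      by_cases hcond : u ∉ S ∧ β ∉ S ∧ β < u
      · rw [if_pos hcond, if_pos ⟨hcond.2.1, hcond.1, hcond.2.2⟩, hskew u β,
          neg_mul, smul_neg]
      · rw [if_neg hcond, if_neg (fun h => hcond ⟨h.2.1, h.1, h.2.2⟩), neg_zero]
    have step4 := Finset.sum_congr rfl fun β (_ : β ∈ Finset.univ) =>
      Finset.sum_congr rfl fun u (_ : u ∈ Finset.univ) => h4 β u
    rw [step4]
    simp only [Finset.sum_neg_distrib]

lemma decomp (π : Fin n → Fin n → MvPolynomial (Fin n) k)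
    (hskew : ∀ a b : Fin n, π a b = - π b a)
    (ω : Finset (Fin n) → MvPolynomial (Fin n) k) (S : Finset (Fin n)) :
    KBd k n π ω S = dRham k n (Jop k n π ω) S - Jop k n π (dRham k n ω) S := by
  unfold KBd
  rw [C1 π ω S, C4 π hskew ω S, C2 π ω S, C3 π ω S]
  abel

end aux2

/-- `d∂ + ∂d = 0` on `Ω^•(A)`; hence the de Rham differential descends to a
square-zero operator on `HP_•(A)`. -/
theorem deRham_anticommutes_KB (π : Fin n → Fin n → MvPolynomial (Fin n) k)
    (hskew : ∀ a b : Fin n, π a b = - π b a)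
    (hJac : ∀ f g h : MvPolynomial (Fin n) k,
      pb k n π f (pb k n π g h) + pb k n π g (pb k n π h f)
        + pb k n π h (pb k n π f g) = 0) :
    ∀ (ω : Finset (Fin n) → MvPolynomial (Fin n) k) (S : Finset (Fin n)),
      dRham k n (KBd k n π ω) S + KBd k n π (dRham k n ω) S = 0 := by
  
  intro ω S
  have hK : KBd k n π ω = fun T => dRham k n (Jop k n π ω) T - Jop k n π (dRham k n ω) T :=
    funext fun T => decomp π hskew ω T
  rw [hK, decomp π hskew (dRham k n ω) S]
  have hsub : dRham k n (fun T => dRham k n (Jop k n π ω) T - Jop k n π (dRham k n ω) T) S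
      = dRham k n (dRham k n (Jop k n π ω)) S - dRham k n (Jop k n π (dRham k n ω)) S := by
    unfold dRham
    rw [← Finset.sum_sub_distrib]
    refine Finset.sum_congr rfl fun a _ => ?_
    rw [map_sub, smul_sub]
  rw [hsub, dsq (Jop k n π ω) S]
  have hz : dRham k n (dRham k n ω) = fun _ => (0 : MvPolynomial (Fin n) k) :=
    funext fun T => dsq ω T
  rw [hz]
  have hJz : Jop k n π (fun _ => (0 : MvPolynomial (Fin n) k)) S = 0 := by
    unfold Jop
    apply Finset.sum_eq_zero; intro a _
    apply Finset.sum_eq_zero; intro b _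
    split_ifs <;> simp
  rw [hJz]
  abel
end
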